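/- arXiv:2302.00770 — 3 statements merged into one kernel-verified Lean document; each statement's English description precedes it below -/
import Mathlib

section
/- Let λ_i = (1, z_i) and λ̃_i ∈ ℂ² for i = 1, 2, 3, 4 satisfy momentum conservation Σ_{i=1}^4 λ_i ⊗ λ̃_i = 0, with all ⟨ij⟩ nonzero. Then the numerator [24]⟨12⟩⟨14⟩ is antisymmetric under transpositions of the indices 2, 3, 4; i.e. [24]⟨12⟩⟨14⟩ = -[23]⟨12⟩⟨13⟩, and similarly for the other transpositions. Consequently the expression [24]⟨12⟩⟨14⟩/(⟨24⟩⟨23⟩⟨34⟩) is invariant under all permutations of {2,3,4}. -/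
/-!
Momentum conservation gives `∑ⱼ [kj]⟨jm⟩ = 0` for all `k, m`. With `m = 1` and `k = a` one of
`2, 3, 4`, only two terms survive: `[ab]⟨b1⟩ + [ac]⟨c1⟩ = 0` for `{a, b, c} = {2, 3, 4}`. This makes
the numerator `[ac]⟨1a⟩⟨1c⟩` change sign under every transposition of `(a, b, c)`; so does the
Vandermonde-type denominator `⟨ac⟩⟨ab⟩⟨bc⟩`, hence their ratio is invariant under transpositions,
which generate `S₃`.
-/

open scoped BigOperators

/-- Square bracket `[ij] = λ̃_i^1 λ̃_j^2 - λ̃_i^2 λ̃_j^1 = det(λ̃_i, λ̃_j)`. -/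
def sqb (a b : Fin 2 → ℂ) : ℂ := a 0 * b 1 - a 1 * b 0

lemma sqb_self (a : Fin 2 → ℂ) : sqb a a = 0 := by
  rw [sqb, mul_comm, sub_self]

lemma sqb_anticomm (a b : Fin 2 → ℂ) : sqb b a = -sqb a b := by
  simp only [sqb]
  ring

section MomentumConservation

variable {ι : Type*} [Fintype ι] (z : ι → ℂ) (lt : ι → Fin 2 → ℂ)

lemma sum_sub_mul_eq_zero_of_momentum_conservation
    (hmom : ∀ α β : Fin 2, ∑ i, (![1, z i] α) * lt i β = 0) (m : ι) (β : Fin 2) :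
    ∑ j, (z j - z m) * lt j β = 0 := by
  have h₀ := hmom 0 β
  have h₁ := hmom 1 β
  simp only [Matrix.cons_val_zero, one_mul, Matrix.cons_val_one] at h₀ h₁
  simp only [sub_mul, Finset.sum_sub_distrib, ← Finset.mul_sum, h₀, h₁, mul_zero, sub_zero]

lemma sum_sqb_mul_sub_eq_zero (hmom : ∀ α β : Fin 2, ∑ i, (![1, z i] α) * lt i β = 0) (k m : ι) :
    ∑ j, sqb (lt k) (lt j) * (z j - z m) = 0 := by
  calc ∑ j, sqb (lt k) (lt j) * (z j - z m)
      = lt k 0 * ∑ j, (z j - z m) * lt j 1 - lt k 1 * ∑ j, (z j - z m) * lt j 0 := by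
        simp only [sqb, Finset.mul_sum, ← Finset.sum_sub_distrib]
        exact Finset.sum_congr rfl fun j _ => by ring
    _ = 0 := by
        simp only [sum_sub_mul_eq_zero_of_momentum_conservation z lt hmom, mul_zero, sub_zero]

end MomentumConservation

section FourPoint

open Equiv

variable (z : Fin 4 → ℂ) (lt : Fin 4 → Fin 2 → ℂ)

lemma sqb_mul_sub_add_sqb_mul_sub_eq_zero
    (hmom : ∀ α β : Fin 2, ∑ i, (![1, z i] α) * lt i β = 0) (σ : Perm (Fin 3)) :
    sqb (lt (σ 0).succ) (lt (σ 1).succ) * (z (σ 1).succ - z 0)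
      + sqb (lt (σ 0).succ) (lt (σ 2).succ) * (z (σ 2).succ - z 0) = 0 := by
  have h := sum_sqb_mul_sub_eq_zero z lt hmom (σ 0).succ 0
  rw [Fin.sum_univ_succ, sub_self, mul_zero, zero_add,
    ← Equiv.sum_comp σ (fun i => sqb (lt (σ 0).succ) (lt i.succ) * (z i.succ - z 0)),
    Fin.sum_univ_three, sqb_self, zero_mul, zero_add] at h
  exact h

/-- `[ac]⟨1a⟩⟨1c⟩` for `(a, b, c) = (σ 0 + 1, σ 1 + 1, σ 2 + 1)`, in the 0-based indexing of `z`. -/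
def fourPointNumerator (σ : Perm (Fin 3)) : ℂ :=
  sqb (lt (σ 0).succ) (lt (σ 2).succ) * (z 0 - z (σ 0).succ) * (z 0 - z (σ 2).succ)

def fourPointDenominator (σ : Perm (Fin 3)) : ℂ :=
  (z (σ 0).succ - z (σ 2).succ) * (z (σ 0).succ - z (σ 1).succ)
    * (z (σ 1).succ - z (σ 2).succ)

lemma fourPointNumerator_mul_swap_zero_one
    (hmom : ∀ α β : Fin 2, ∑ i, (![1, z i] α) * lt i β = 0) (σ : Perm (Fin 3)) :
    fourPointNumerator z lt (σ * swap 0 1) = -fourPointNumerator z lt σ := by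
  -- the two-term relation centred at `c = σ 2 + 1`
  have h := sqb_mul_sub_add_sqb_mul_sub_eq_zero z lt hmom (σ * swap 0 2)
  simp only [Fin.isValue, Perm.coe_mul, Function.comp_apply, swap_apply_left, swap_apply_right,
    ne_eq, one_ne_zero, not_false_eq_true, Fin.reduceEq, swap_apply_of_ne_of_ne] at h
  simp only [fourPointNumerator, Fin.isValue, Perm.coe_mul, Function.comp_apply, swap_apply_left,
    ne_eq, Fin.reduceEq, not_false_eq_true, swap_apply_of_ne_of_ne]
  rw [sqb_anticomm (lt (σ 0).succ), sqb_anticomm (lt (σ 1).succ)] at h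
  linear_combination (z 0 - z (σ 2).succ) * h

lemma fourPointNumerator_mul_swap_zero_two (σ : Perm (Fin 3)) :
    fourPointNumerator z lt (σ * swap 0 2) = -fourPointNumerator z lt σ := by
  simp only [fourPointNumerator, Fin.isValue, Perm.coe_mul, Function.comp_apply, swap_apply_left,
    swap_apply_right]
  rw [sqb_anticomm]
  ring

lemma fourPointNumerator_mul_swap_one_two
    (hmom : ∀ α β : Fin 2, ∑ i, (![1, z i] α) * lt i β = 0) (σ : Perm (Fin 3)) :
    fourPointNumerator z lt (σ * swap 1 2) = -fourPointNumerator z lt σ := by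
  have h := sqb_mul_sub_add_sqb_mul_sub_eq_zero z lt hmom σ
  simp only [fourPointNumerator, Fin.isValue, Perm.coe_mul, Function.comp_apply, ne_eq,
    zero_ne_one, not_false_eq_true, Fin.reduceEq, swap_apply_of_ne_of_ne, swap_apply_right]
  linear_combination (z (σ 0).succ - z 0) * h

lemma fourPointNumerator_mul_swap
    (hmom : ∀ α β : Fin 2, ∑ i, (![1, z i] α) * lt i β = 0) {x y : Fin 3} (hxy : x ≠ y)
    (σ : Perm (Fin 3)) :
    fourPointNumerator z lt (σ * swap x y) = -fourPointNumerator z lt σ := by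
  fin_cases x <;> fin_cases y
  all_goals first | exact absurd rfl hxy | skip
  · exact fourPointNumerator_mul_swap_zero_one z lt hmom σ
  · exact fourPointNumerator_mul_swap_zero_two z lt σ
  · rw [swap_comm]; exact fourPointNumerator_mul_swap_zero_one z lt hmom σ
  · exact fourPointNumerator_mul_swap_one_two z lt hmom σ
  · rw [swap_comm]; exact fourPointNumerator_mul_swap_zero_two z lt σ
  · rw [swap_comm]; exact fourPointNumerator_mul_swap_one_two z lt hmom σ

lemma fourPointDenominator_mul_swap {x y : Fin 3} (hxy : x ≠ y) (σ : Perm (Fin 3)) :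
    fourPointDenominator z (σ * swap x y) = -fourPointDenominator z σ := by
  fin_cases x <;> fin_cases y <;>
    simp only [Fin.zero_eta, Fin.mk_one, Fin.reduceFinMk, Fin.isValue, ne_eq, not_true_eq_false,
      fourPointDenominator, Perm.coe_mul, Function.comp_apply, swap_apply_left, swap_apply_right,
      swap_apply_of_ne_of_ne, Fin.reduceEq, not_false_eq_true, zero_ne_one, one_ne_zero]
      at hxy ⊢ <;>
    ring

lemma fourPointNumerator_div_fourPointDenominator
    (hmom : ∀ α β : Fin 2, ∑ i, (![1, z i] α) * lt i β = 0) (σ : Perm (Fin 3)) :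
    fourPointNumerator z lt σ / fourPointDenominator z σ
      = fourPointNumerator z lt 1 / fourPointDenominator z 1 := by
  induction σ using Perm.swap_induction_on' with
  | one => rfl
  | mul_swap σ x y hxy ih =>
    rw [fourPointNumerator_mul_swap z lt hmom hxy, fourPointDenominator_mul_swap z hxy,
      neg_div_neg_eq, ih]

end FourPoint

theorem numerator_antisymmetric_and_ratio_symmetric_general
    (z : Fin 4 → ℂ) (lt : Fin 4 → Fin 2 → ℂ)
    (hmom : ∀ α β : Fin 2, ∑ i, (![1, z i] α) * lt i β = 0) :
    -- antisymmetry under the transposition (3 4):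
    (sqb (lt 1) (lt 3) * (z 0 - z 1) * (z 0 - z 3)
        = -(sqb (lt 1) (lt 2) * (z 0 - z 1) * (z 0 - z 2)))
    -- antisymmetry under the transposition (2 3):
    ∧ (sqb (lt 1) (lt 3) * (z 0 - z 1) * (z 0 - z 3)
        = -(sqb (lt 2) (lt 3) * (z 0 - z 2) * (z 0 - z 3)))
    -- antisymmetry under the transposition (2 4):
    ∧ (sqb (lt 1) (lt 3) * (z 0 - z 1) * (z 0 - z 3)
        = -(sqb (lt 3) (lt 1) * (z 0 - z 3) * (z 0 - z 1)))
    -- full S₃-invariance of the ratio [24]⟨12⟩⟨14⟩/(⟨24⟩⟨23⟩⟨34⟩):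
    ∧ ∀ σ : Equiv.Perm (Fin 3),
        sqb (lt (Fin.succ (σ 0))) (lt (Fin.succ (σ 2)))
            * (z 0 - z (Fin.succ (σ 0))) * (z 0 - z (Fin.succ (σ 2)))
          / ((z (Fin.succ (σ 0)) - z (Fin.succ (σ 2)))
              * (z (Fin.succ (σ 0)) - z (Fin.succ (σ 1)))
              * (z (Fin.succ (σ 1)) - z (Fin.succ (σ 2))))
        = sqb (lt 1) (lt 3) * (z 0 - z 1) * (z 0 - z 3)
          / ((z 1 - z 3) * (z 1 - z 2) * (z 2 - z 3)) :=
  ⟨neg_eq_iff_eq_neg.mp (fourPointNumerator_mul_swap_one_two z lt hmom 1).symm,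
    neg_eq_iff_eq_neg.mp (fourPointNumerator_mul_swap_zero_one z lt hmom 1).symm,
    neg_eq_iff_eq_neg.mp (fourPointNumerator_mul_swap_zero_two z lt 1).symm,
    fourPointNumerator_div_fourPointDenominator z lt hmom⟩

/-- With momentum conservation for four massless momenta (`λ_i = (1, z_i)`, indices `0,1,2,3`
standing for `1,2,3,4`), the numerator `[24]⟨12⟩⟨14⟩` is antisymmetric under transpositions of
the indices `2,3,4`, and consequently `[24]⟨12⟩⟨14⟩/(⟨24⟩⟨23⟩⟨34⟩)` is invariant under all
permutations of `{2,3,4}`. -/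
theorem numerator_antisymmetric_and_ratio_symmetric
    (z : Fin 4 → ℂ) (lt : Fin 4 → Fin 2 → ℂ)
    (hne : ∀ i j : Fin 4, i ≠ j → z i ≠ z j)
    (hmom : ∀ α β : Fin 2, ∑ i, (![1, z i] α) * lt i β = 0) :
    -- antisymmetry under the transposition (3 4):
    (sqb (lt 1) (lt 3) * (z 0 - z 1) * (z 0 - z 3)
        = -(sqb (lt 1) (lt 2) * (z 0 - z 1) * (z 0 - z 2)))
    -- antisymmetry under the transposition (2 3):
    ∧ (sqb (lt 1) (lt 3) * (z 0 - z 1) * (z 0 - z 3)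
        = -(sqb (lt 2) (lt 3) * (z 0 - z 2) * (z 0 - z 3)))
    -- antisymmetry under the transposition (2 4):
    ∧ (sqb (lt 1) (lt 3) * (z 0 - z 1) * (z 0 - z 3)
        = -(sqb (lt 3) (lt 1) * (z 0 - z 3) * (z 0 - z 1)))
    -- full S₃-invariance of the ratio [24]⟨12⟩⟨14⟩/(⟨24⟩⟨23⟩⟨34⟩):
    ∧ ∀ σ : Equiv.Perm (Fin 3),
        sqb (lt (Fin.succ (σ 0))) (lt (Fin.succ (σ 2)))
            * (z 0 - z (Fin.succ (σ 0))) * (z 0 - z (Fin.succ (σ 2)))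
          / ((z (Fin.succ (σ 0)) - z (Fin.succ (σ 2)))
              * (z (Fin.succ (σ 0)) - z (Fin.succ (σ 1)))
              * (z (Fin.succ (σ 1)) - z (Fin.succ (σ 2))))
        = sqb (lt 1) (lt 3) * (z 0 - z 1) * (z 0 - z 3)
          / ((z 1 - z 3) * (z 1 - z 2) * (z 2 - z 3)) :=
  numerator_antisymmetric_and_ratio_symmetric_general z lt hmom
end

section
/- Let A be an associative ℂ-algebra and Tr : A → ℂ a linear functional that is cyclic (Tr(xy) = Tr(yx)) and reversal-invariant (Tr(x₁x₂⋯x_n) = Tr(x_n⋯x₂x₁)). Then for any a, b, c, d ∈ A: 3(Tr(abcd) + Tr(bacd)) - 2(Tr(abcd) + Tr(acdb) + Tr(adbc)) = -Tr([a,d][b,c]) - (1/2)Tr([b,a][c,d]), where [x,y] = xy - yx. -/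
/-- For a cyclic, reversal-invariant trace functional `Tr` on an associative ℂ-algebra,
the non-totally-symmetric combination of quartic traces reorganizes into commutator
traces:
`3(Tr(abcd) + Tr(bacd)) - 2(Tr(abcd) + Tr(acdb) + Tr(adbc))
  = -Tr([a,d][b,c]) - (1/2)Tr([b,a][c,d])`. -/
theorem quartic_trace_commutator_identity {A : Type*} [Ring A] [Algebra ℂ A]
    (Tr : A →ₗ[ℂ] ℂ)
    (hcyc : ∀ x y : A, Tr (x * y) = Tr (y * x))
    (hrev : ∀ l : List A, Tr l.prod = Tr l.reverse.prod)
    (a b c d : A) :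
    3 * (Tr (a * b * c * d) + Tr (b * a * c * d))
        - 2 * (Tr (a * b * c * d) + Tr (a * c * d * b) + Tr (a * d * b * c))
      = -Tr ((a * d - d * a) * (b * c - c * b))
        - (1 / 2) * Tr ((b * a - a * b) * (c * d - d * c)) := by
  have h3 : ∀ x y z : A, Tr (x * y * z) = Tr (z * y * x) := by
    intro x y z
    have := hrev [x, y, z]
    simpa [mul_assoc] using this
  have hrot : ∀ x y z w : A, Tr (x * y * z * w) = Tr (w * x * y * z) := by
    intro x y z w
    rw [hcyc (x * y * z) w, ← mul_assoc, ← mul_assoc]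
  have s34 : ∀ x y z w : A, Tr (x * y * z * w) = Tr (x * y * w * z) := by
    intro x y z w
    rw [h3 (x * y) z w, hcyc (w * z) (x * y), ← mul_assoc]
  have s12 : ∀ x y z w : A, Tr (x * y * z * w) = Tr (y * x * z * w) := by
    intro x y z w
    rw [hrot x y z w, hrot w x y z, s34 z w x y, hrot z w y x, hrot x z w y]
  have s23 : ∀ x y z w : A, Tr (x * y * z * w) = Tr (x * z * y * w) := by
    intro x y z w
    rw [hrot x y z w, s34 w x y z, hrot w x z y, hrot y w x z, hrot z y w x]
  have e1 : Tr (b * a * c * d) = Tr (a * b * c * d) := (s12 a b c d).symm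
  have e2 : Tr (a * c * d * b) = Tr (a * b * c * d) :=
    ((s23 a b c d).trans (s34 a c b d)).symm
  have e3 : Tr (a * d * b * c) = Tr (a * b * c * d) :=
    ((s34 a b c d).trans (s23 a b d c)).symm
  have e4 : Tr (a * d * c * b) = Tr (a * b * c * d) :=
    ((s34 a b c d).trans ((s23 a b d c).trans (s34 a d b c))).symm
  have e5 : Tr (d * a * b * c) = Tr (a * b * c * d) := (hrot a b c d).symm
  have e6 : Tr (d * a * c * b) = Tr (a * b * c * d) :=
    ((hrot a b c d).trans (s34 d a b c)).symm
  have e7 : Tr (b * a * d * c) = Tr (a * b * c * d) :=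
    ((s12 a b c d).trans (s34 b a c d)).symm
  have e8 : Tr (a * b * d * c) = Tr (a * b * c * d) := (s34 a b c d).symm
  simp only [mul_sub, sub_mul, ← mul_assoc, map_sub]
  rw [e1, e2, e3, e4, e5, e6, e7, e8]
  ring
end

section
/- Let V be a finite-dimensional complex vector space, P ∈ End(V⊗V) the flip u⊗v ↦ v⊗u, and a₁, ..., a_n ∈ End(V) with ρ(a) = a⊗1 + 1⊗a. Then tr_{V⊗V}(ρ(a₁)⋯ρ(a_n)·P) = Σ_{I ⊆ {1,...,n}} tr_V(a_I · a_{I^c}), where a_I is the ordered product over I. Consequently, the trace in the exterior square satisfies tr_{Λ²V}(ρ(a₁)⋯ρ(a_n)) = (1/2) Σ_{I ⊆ {1,...,n}} ( tr_V(a_I) tr_V(a_{I^c}) - tr_V(a_I a_{I^c}) ). -/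
/-!
Since `a ⊗ 1` and `1 ⊗ b` commute, expanding `∏ᵢ (aᵢ ⊗ 1 + 1 ⊗ aᵢ)` gives
`∑_I a_I ⊗ a_{Iᶜ}`. Composing `f ⊗ g` with the flip `P` and taking the trace gives
`tr (f g)`, whereas `tr (f ⊗ g) = tr f · tr g`; the exterior-square formula is the
combination of the two with the projector `(1 - P) / 2`.
-/

open scoped TensorProduct

theorem List.prod_map_add_eq_sum_powerset {R ι : Type*} [Semiring R] [DecidableEq ι]
    (x y : ι → R) (h : ∀ i j, Commute (x i) (y j)) {l : List ι} (hl : l.Nodup) :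
    (l.map fun i => x i + y i).prod =
      ∑ I ∈ l.toFinset.powerset,
        ((l.filter (· ∈ I)).map x).prod * ((l.filter (· ∉ I)).map y).prod := by
  induction l with
  | nil => simp
  | cons i t ih =>
    obtain ⟨hit, ht⟩ := List.nodup_cons.mp hl
    have hit' : i ∉ t.toFinset := List.mem_toFinset.not.mpr hit
    rw [List.map_cons, List.prod_cons, ih ht, List.toFinset_cons,
      Finset.sum_powerset_insert hit', Finset.mul_sum]
    simp only [add_mul, Finset.sum_add_distrib]
    rw [add_comm]
    congr 1 <;> refine Finset.sum_congr rfl fun J hJ => ?_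
    · have hiJ : i ∉ J := fun hi => hit' (Finset.mem_powerset.mp hJ hi)
      have hc : Commute (y i) ((t.filter (· ∈ J)).map x).prod :=
        Commute.list_prod_right _ _ fun z hz => by
          obtain ⟨j, -, rfl⟩ := List.mem_map.mp hz
          exact (h j i).symm
      rw [List.filter_cons_of_neg (by simpa), List.filter_cons_of_pos (by simpa), List.map_cons,
        List.prod_cons, ← mul_assoc, ← mul_assoc, hc.eq]
    · have hmem : ∀ j ∈ t, j ∈ insert i J ↔ j ∈ J := fun j hj => by
        simp [ne_of_mem_of_not_mem hj hit]
      have hx : t.filter (· ∈ insert i J) = t.filter (· ∈ J) :=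
        List.filter_congr fun j hj => by simp only [hmem j hj]
      have hy : t.filter (· ∉ insert i J) = t.filter (· ∉ J) :=
        List.filter_congr fun j hj => by simp only [hmem j hj]
      rw [List.filter_cons_of_pos (by simp), List.filter_cons_of_neg (by simp), hx, hy,
        List.map_cons, List.prod_cons, mul_assoc]

theorem Finset.sort_eq_filter_finRange {n : ℕ} (I : Finset (Fin n)) :
    I.sort (· ≤ ·) = (List.finRange n).filter (· ∈ I) :=
  I.sortedLT_sort.eq_of_mem_iff ((List.sortedLT_finRange n).pairwise.filter _).sortedLT
    (by simp)

theorem List.prod_ofFn_add_eq_sum_finset {R : Type*} [Semiring R] {n : ℕ} (x y : Fin n → R)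
    (h : ∀ i j, Commute (x i) (y j)) :
    (List.ofFn fun i => x i + y i).prod =
      ∑ I : Finset (Fin n),
        ((I.sort (· ≤ ·)).map x).prod * ((Iᶜ.sort (· ≤ ·)).map y).prod := by
  rw [List.ofFn_eq_map, List.prod_map_add_eq_sum_powerset x y h (List.nodup_finRange n),
    List.toFinset_finRange, Finset.powerset_univ]
  simp only [Finset.sort_eq_filter_finRange, Finset.mem_compl]

section

variable {R M N : Type*} [CommSemiring R] [AddCommMonoid M] [Module R M] [AddCommMonoid N]
  [Module R N]

theorem LinearMap.rTensor_list_prod (l : List (Module.End R M)) :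
    l.prod.rTensor N = (l.map (rTensor N)).prod :=
  map_list_prod (Module.End.rTensorAlgHom R M N) l

theorem LinearMap.lTensor_list_prod (l : List (Module.End R N)) :
    l.prod.lTensor M = (l.map (lTensor M)).prod :=
  map_list_prod (Module.End.lTensorAlgHom R N M) l

theorem TensorProduct.prod_ofFn_rTensor_add_lTensor {n : ℕ}
    (a : Fin n → Module.End R M) (b : Fin n → Module.End R N) :
    (List.ofFn fun i =>
        (map (a i) LinearMap.id + map LinearMap.id (b i) : Module.End R (M ⊗[R] N))).prod =
      ∑ I : Finset (Fin n),
        map ((I.sort (· ≤ ·)).map a).prod ((Iᶜ.sort (· ≤ ·)).map b).prod := by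
  have h i j : Commute ((a i).rTensor N) ((b j).lTensor M) :=
    (LinearMap.rTensor_comp_lTensor (f := a i) (g := b j)).trans
      (LinearMap.lTensor_comp_rTensor (f := a i) (g := b j)).symm
  refine (List.prod_ofFn_add_eq_sum_finset _ _ h).trans (Finset.sum_congr rfl fun I _ => ?_)
  rw [← LinearMap.rTensor_comp_lTensor, ← Module.End.mul_eq_comp]
  congr 1
  · rw [LinearMap.rTensor_list_prod, List.map_map]; rfl
  · rw [LinearMap.lTensor_list_prod, List.map_map]; rfl

end

theorem LinearMap.trace_map_mul_tensorProductComm {R M : Type*} [CommSemiring R]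
    [AddCommMonoid M] [Module R M] [Module.Free R M] [Module.Finite R M] (f g : Module.End R M) :
    trace R (M ⊗[R] M) (TensorProduct.map f g * (TensorProduct.comm R M M).toLinearMap) =
      trace R M (f * g) := by
  let b := Module.Free.chooseBasis R M
  rw [trace_eq_matrix_trace R (b.tensorProduct b), trace_eq_matrix_trace R b, toMatrix_mul b,
    Matrix.trace, Matrix.trace, Fintype.sum_prod_type]
  -- the `(i, j)` diagonal entry is `f i j * g j i`
  refine Finset.sum_congr rfl fun i _ => Finset.sum_congr rfl fun j _ => ?_
  simp [toMatrix_apply, mul_comm]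

/-- For endomorphisms `a₁, ..., a_n` of a finite-dimensional complex vector space `V`,
with `ρ(a) = a⊗1 + 1⊗a` and `P` the flip of `V ⊗ V`, one has
`tr_{V⊗V}(ρ(a₁)⋯ρ(a_n)·P) = Σ_{I} tr_V(a_I · a_{I^c})`, and consequently the trace in
the exterior square (image of the projector `(1-P)/2`) satisfies
`tr_{Λ²V}(ρ(a₁)⋯ρ(a_n)) = (1/2) Σ_I (tr_V(a_I)tr_V(a_{I^c}) - tr_V(a_I a_{I^c}))`. -/
theorem trace_tensor_square_flip_expansion (V : Type*) [AddCommGroup V] [Module ℂ V]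
    [FiniteDimensional ℂ V] (n : ℕ) (a : Fin n → Module.End ℂ V) :
    (LinearMap.trace ℂ (V ⊗[ℂ] V)
        (((List.ofFn fun i =>
            (TensorProduct.map (a i) LinearMap.id + TensorProduct.map LinearMap.id (a i) :
              Module.End ℂ (V ⊗[ℂ] V))).prod)
          * (TensorProduct.comm ℂ V V).toLinearMap)
      = ∑ I : Finset (Fin n),
          LinearMap.trace ℂ V ((((I.sort (· ≤ ·)).map a).prod) * (((Iᶜ.sort (· ≤ ·)).map a).prod)))
    ∧ (LinearMap.trace ℂ (V ⊗[ℂ] V)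
        (((List.ofFn fun i =>
            (TensorProduct.map (a i) LinearMap.id + TensorProduct.map LinearMap.id (a i) :
              Module.End ℂ (V ⊗[ℂ] V))).prod)
          * ((2 : ℂ)⁻¹ • (1 - (TensorProduct.comm ℂ V V).toLinearMap)))
      = (1 / 2) * ∑ I : Finset (Fin n),
          (LinearMap.trace ℂ V (((I.sort (· ≤ ·)).map a).prod)
              * LinearMap.trace ℂ V (((Iᶜ.sort (· ≤ ·)).map a).prod)
            - LinearMap.trace ℂ V
                ((((I.sort (· ≤ ·)).map a).prod) * (((Iᶜ.sort (· ≤ ·)).map a).prod)))) := by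
  simp only [TensorProduct.prod_ofFn_rTensor_add_lTensor, mul_smul_comm, mul_sub, mul_one,
    Finset.sum_mul, map_smul, map_sub, map_sum, LinearMap.trace_map_mul_tensorProductComm,
    LinearMap.trace_tensorProduct', smul_eq_mul, Finset.sum_sub_distrib]
  exact ⟨trivial, by ring⟩
end
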